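/- Let a, n, b be nonnegative integers with a+n+b ≥ 1, and let v be a permutation of {1,…,a+n+b} such that v(j) = j for every j with a < j ≤ a+n, and such that v⁻¹ is strictly increasing on {1,…,a} and on {a+n+1,…,a+n+b}. Let k = #{s : 1 ≤ s ≤ a and v⁻¹(s) > a+n}. Then the number of pairs (s,t) with 1 ≤ s ≤ a, a+n < t ≤ a+n+b and v(s) > v(t) is at most k(a+b) − k². -/

import Mathlib

/-!
Let `A = {s < a}` and `T = {t ≥ a + n : v t < a}`, so that `k = #T` (transport by `v`). Since `v`
fixes the middle block, it maps the outer blocks to themselves; so if `s ∈ A`, `t ≥ a + n` and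
`v t < v s`, monotonicity of `v⁻¹` on the last block forces `v t < a`, i.e. `t ∈ T`. Hence there are
at most `a k` such pairs, and `a k ≤ k (a + b) - k²` because `T` lies in the last block, so `k ≤ b`.
-/

open Finset

theorem Fin.card_filter_le_val {N m : ℕ} : #{i : Fin N | m ≤ (i : ℕ)} = N - m := by
  have h := card_filter_add_card_filter_not (s := univ) (fun i : Fin N => (i : ℕ) < m)
  simp only [not_lt, Fin.card_filter_val_lt, card_univ, Fintype.card_fin] at h
  omega

namespace Equiv.Perm

variable {α : Type*}

theorem apply_notMem_of_forall_mem_apply_eq (v : Perm α) {M : Set α} (hM : ∀ j ∈ M, v j = j)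
    {x : α} (hx : x ∉ M) : v x ∉ M :=
  fun h => hx (v.injective (hM _ h) ▸ h)

theorem apply_lt_of_strictMonoOn_symm [LinearOrder α] (v : Perm α) {c : α}
    (hv : StrictMonoOn v.symm (Set.Ici c)) {s t : α} (hst : s < t) (hinv : v t < v s) :
    v t < c := by
  by_contra! h
  have hts := hv (Set.mem_Ici.2 h) (Set.mem_Ici.2 (h.trans hinv.le)) hinv
  rw [symm_apply_apply, symm_apply_apply] at hts
  exact hts.not_gt hst

end Equiv.Perm

section Blocks

variable {a n b : ℕ} (v : Equiv.Perm (Fin (a + n + b)))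

theorem card_filter_lastBlock_apply_lt :
    #{t : Fin (a + n + b) | a + n ≤ (t : ℕ) ∧ (v t : ℕ) < a} =
      #{s : Fin (a + n + b) | (s : ℕ) < a ∧ a + n ≤ (v.symm s : ℕ)} :=
  card_nbij' v v.symm (fun t ht => by simp_all) (fun s hs => by simp_all)
    (fun t _ => v.symm_apply_apply t) (fun s _ => v.apply_symm_apply s)

theorem filter_crossing_inversion_subset
    (hfix : ∀ j : Fin (a + n + b), a ≤ (j : ℕ) → (j : ℕ) < a + n → v j = j)
    (hinc2 : ∀ i j : Fin (a + n + b), i < j → a + n ≤ (i : ℕ) → v.symm i < v.symm j) :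
    (univ.filter fun p : Fin (a + n + b) × Fin (a + n + b) =>
        (p.1 : ℕ) < a ∧ a + n ≤ (p.2 : ℕ) ∧ v p.2 < v p.1) ⊆
      (univ.filter fun s : Fin (a + n + b) => (s : ℕ) < a) ×ˢ
        (univ.filter fun t : Fin (a + n + b) => a + n ≤ (t : ℕ) ∧ (v t : ℕ) < a) := by
  rintro ⟨s, t⟩ hp
  obtain ⟨hs, ht, hinv⟩ : (s : ℕ) < a ∧ a + n ≤ (t : ℕ) ∧ v t < v s := by simpa using hp
  have hvt_lt : v t < ⟨a + n, by omega⟩ :=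
    v.apply_lt_of_strictMonoOn_symm (fun i hi j _ hij => hinc2 i j hij (Fin.le_def.1 hi))
      (Fin.lt_def.2 (by omega)) hinv
  have hvt_notMem := v.apply_notMem_of_forall_mem_apply_eq
    (M := {j | a ≤ (j : ℕ) ∧ (j : ℕ) < a + n}) (fun j hj => hfix j hj.1 hj.2) (x := t)
    fun h => h.2.not_ge ht
  simp only [Set.mem_ofPred_eq, Fin.lt_def] at hvt_lt hvt_notMem
  simp only [mem_product, mem_filter, mem_univ, true_and]
  omega

end Blocks

theorem crossing_inversions_le_general (a n b : ℕ)
    (v : Equiv.Perm (Fin (a + n + b)))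
    (hfix : ∀ j : Fin (a + n + b), a ≤ (j : ℕ) → (j : ℕ) < a + n → v j = j)
    (hinc2 : ∀ i j : Fin (a + n + b), i < j → a + n ≤ (i : ℕ) → v.symm i < v.symm j)
    (k : ℕ)
    (hk : k = (Finset.univ.filter
      (fun s : Fin (a + n + b) => (s : ℕ) < a ∧ a + n ≤ ((v.symm s : Fin (a + n + b)) : ℕ))).card) :
    (Finset.univ.filter
        (fun p : Fin (a + n + b) × Fin (a + n + b) =>
          (p.1 : ℕ) < a ∧ a + n ≤ (p.2 : ℕ) ∧ v p.2 < v p.1)).card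
      ≤ k * (a + b) - k * k := by
  have hTk : #{t : Fin (a + n + b) | a + n ≤ (t : ℕ) ∧ (v t : ℕ) < a} = k :=
    (card_filter_lastBlock_apply_lt v).trans hk.symm
  have hkb : k ≤ b := by
    have hsub : (univ.filter fun t : Fin (a + n + b) => a + n ≤ (t : ℕ) ∧ (v t : ℕ) < a) ⊆
        univ.filter fun t : Fin (a + n + b) => a + n ≤ (t : ℕ) :=
      monotone_filter_right univ fun _ _ h => h.1
    simpa [hTk, Fin.card_filter_le_val] using card_le_card hsub
  calc _ ≤ a * k := by
        simpa [card_product, Fin.card_filter_val_lt, hTk, min_eq_right (show a ≤ a + n + b by omega)]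
          using card_le_card (filter_crossing_inversion_subset v hfix hinc2)
    _ ≤ k * (a + b) - k * k := by
        have hkk : k * k ≤ k * b := Nat.mul_le_mul_left k hkb
        rw [Nat.mul_add, Nat.mul_comm a k]
        omega

/-- Let `v` be a permutation of `{1,…,a+n+b}` (encoded `0`-indexed) fixing the
middle block pointwise, with `v⁻¹` strictly increasing on the first block
`{1,…,a}` and on the last block `{a+n+1,…,a+n+b}`.  Let
`k = #{s ≤ a : v⁻¹(s) > a+n}`.  Then the number of pairs `(s,t)` with
`s ≤ a < a+n < t` and `v(s) > v(t)` is at most `k(a+b) - k²`. -/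
theorem crossing_inversions_le (a n b : ℕ) (hpos : 1 ≤ a + n + b)
    (v : Equiv.Perm (Fin (a + n + b)))
    (hfix : ∀ j : Fin (a + n + b), a ≤ (j : ℕ) → (j : ℕ) < a + n → v j = j)
    (hinc1 : ∀ i j : Fin (a + n + b), i < j → (j : ℕ) < a → v.symm i < v.symm j)
    (hinc2 : ∀ i j : Fin (a + n + b), i < j → a + n ≤ (i : ℕ) → v.symm i < v.symm j)
    (k : ℕ)
    (hk : k = (Finset.univ.filter
      (fun s : Fin (a + n + b) => (s : ℕ) < a ∧ a + n ≤ ((v.symm s : Fin (a + n + b)) : ℕ))).card) :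
    (Finset.univ.filter
        (fun p : Fin (a + n + b) × Fin (a + n + b) =>
          (p.1 : ℕ) < a ∧ a + n ≤ (p.2 : ℕ) ∧ v p.2 < v p.1)).card
      ≤ k * (a + b) - k * k :=
  crossing_inversions_le_general a n b v hfix hinc2 k hk
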